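/- Let q = p^r > 3 with p an odd prime, let t(x) = x + ∑_{k=0}^{q-2} x^k ∈ F_q[x], and define recursively f_1 = x_1 and f_i(x_1,…,x_i) as the reduced form of t(f_{i-1}^{q-2} + x_i^{q-2}) for i ≥ 2. Then f_4(x_1,x_2,x_3,x_4) has total degree 4(q-2). -/

import Mathlib

/-!
Over `F = 𝔽_q` we have `x ^ (q - 2) = x⁻¹` and `t` acts as the transposition `(0 1)`, so `f₄` is
the reduced polynomial of `g(g(g(x₀, x₁), x₂), x₃)` with `g(y, z) = (0 1)(y⁻¹ + z⁻¹)`.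

The coefficient of `X^m` in a reduced polynomial `P` is a weighted sum `∑ₓ P(x) ∏ᵢ w_{mᵢ}(xᵢ)`.
Since `g` is a permutation in each variable, `f₄` sums to zero along every coordinate line, which
kills every monomial containing some `Xᵢ ^ (q - 1)`; hence `deg f₄ ≤ 4(q - 2)`. The coefficient of
`(X₀X₁X₂X₃) ^ (q - 2)` is `∑ₓ f₄(x) x₀x₁x₂x₃`. Summing out `x₃`, `x₂`, `x₁` in turn through the
substitution `z = y⁻¹ + c⁻¹` reduces each step to the partial-fraction sums
`∑_z (z - b)⁻¹ (z - c)⁻ⁿ = (n + 1)(b - c)⁻ⁿ⁻¹`, and the result is `-4`, which is nonzero in odd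
characteristic.
-/

open Finset

theorem Fintype.sum_eq_zero_of_forall_sum_update_eq_zero {σ β M : Type*} [Fintype σ]
    [DecidableEq σ] [Fintype β] [AddCommMonoid M] (i : σ) (f : (σ → β) → M)
    (h : ∀ x, ∑ a, f (Function.update x i a) = 0) : ∑ x, f x = 0 := by
  rcases isEmpty_or_nonempty β with hβ | ⟨⟨b⟩⟩
  · have : IsEmpty (σ → β) := ⟨fun x => isEmptyElim (x i)⟩
    exact Fintype.sum_empty f
  rw [← (Equiv.funSplitAt i β).symm.sum_comp, Fintype.sum_prod_type_right]
  refine Finset.sum_eq_zero fun y _ => ?_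
  convert h ((Equiv.funSplitAt i β).symm (b, y)) using 3 with a
  ext j
  rcases eq_or_ne j i with rfl | hj <;> simp [*]

section PartialFractions

variable {F : Type*} [Field F]

theorem inv_sub_mul_inv_sub {b c z : F} (hzb : z ≠ b) (hzc : z ≠ c) :
    (z - b)⁻¹ * (z - c)⁻¹ * (b - c) = (z - b)⁻¹ - (z - c)⁻¹ := by
  field_simp [sub_ne_zero.mpr hzb, sub_ne_zero.mpr hzc]
  ring

variable [DecidableEq F]

-- The indicator terms correct for `0⁻¹ = 0` at the poles.
theorem inv_sub_mul_inv_sub_eq {b c : F} (hbc : b ≠ c) (z : F) :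
    (z - b)⁻¹ * (z - c)⁻¹ = (b - c)⁻¹ * ((z - b)⁻¹ - (z - c)⁻¹)
      + ((if z = b then ((b - c)⁻¹) ^ 2 else 0) + if z = c then ((b - c)⁻¹) ^ 2 else 0) := by
  rcases eq_or_ne z b with rfl | hzb
  · simp only [sub_self, inv_zero, if_true, if_neg hbc]
    ring
  rcases eq_or_ne z c with rfl | hzc
  · simp only [sub_self, inv_zero, if_true, if_neg hzb]
    rw [← neg_sub b z, inv_neg]
    ring
  · have he : (b - c)⁻¹ * (b - c) = 1 := inv_mul_cancel₀ (sub_ne_zero.mpr hbc)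
    simp only [hzb, hzc, if_false, add_zero]
    linear_combination (b - c)⁻¹ * inv_sub_mul_inv_sub hzb hzc - (z - b)⁻¹ * (z - c)⁻¹ * he

theorem inv_sub_mul_inv_sub_mul_pow_succ_eq {b c : F} (hbc : b ≠ c) {n : ℕ} (hn : n ≠ 0)
    (z : F) :
    (z - b)⁻¹ * ((z - c)⁻¹) ^ (n + 1)
      = (b - c)⁻¹ * ((z - b)⁻¹ * ((z - c)⁻¹) ^ n - ((z - c)⁻¹) ^ (n + 1))
        + if z = b then ((b - c)⁻¹) ^ (n + 2) else 0 := by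
  rcases eq_or_ne z b with rfl | hzb
  · simp only [sub_self, inv_zero, if_true]
    ring
  rcases eq_or_ne z c with rfl | hzc
  · simp [hzb, zero_pow hn]
  · have he : (b - c)⁻¹ * (b - c) = 1 := inv_mul_cancel₀ (sub_ne_zero.mpr hbc)
    simp only [hzb, if_false, add_zero]
    linear_combination (b - c)⁻¹ * ((z - c)⁻¹) ^ n * inv_sub_mul_inv_sub hzb hzc
      - (z - b)⁻¹ * ((z - c)⁻¹) ^ (n + 1) * he

end PartialFractions

namespace FiniteField

variable {F : Type*} [Field F] [Fintype F]

local notation "q" => Fintype.card F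

theorem pow_card_sub_two_eq_inv (hq : 2 < q) (a : F) : a ^ (q - 2) = a⁻¹ := by
  rcases eq_or_ne a 0 with rfl | ha
  · rw [zero_pow (by omega), inv_zero]
  · refine eq_inv_of_mul_eq_one_left ?_
    rw [← pow_succ, show q - 2 + 1 = q - 1 by omega, pow_card_sub_one_eq_one a ha]

theorem sum_pow_card_sub_one : ∑ a : F, a ^ (q - 1) = -1 := by
  classical
  have h : ∀ a : F, a ^ (q - 1) = 1 - if a = 0 then 1 else 0 := fun a => by
    split_ifs with ha
    · simp [ha, Nat.sub_ne_zero_of_lt Fintype.one_lt_card]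
    · rw [pow_card_sub_one_eq_one a ha, sub_zero]
  simp [h, Finset.sum_sub_distrib]

theorem sum_pow_of_lt_two_mul {k : ℕ} (hk : k < 2 * (q - 1)) :
    ∑ a : F, a ^ k = if k = q - 1 then -1 else 0 := by
  split_ifs with h
  · rw [h, sum_pow_card_sub_one]
  rcases lt_or_gt_of_ne h with hlt | hgt
  · exact sum_pow_lt_card_sub_one F k hlt
  · have hred : ∀ a : F, a ^ k = a ^ (k - (q - 1)) := fun a => by
      rcases eq_or_ne a 0 with rfl | ha
      · rw [zero_pow (by omega), zero_pow (by omega)]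
      · rw [← one_mul (a ^ (k - (q - 1))), ← pow_card_sub_one_eq_one a ha, ← pow_add]
        congr 1; omega
    simp only [hred]
    exact sum_pow_lt_card_sub_one F _ (by omega)

theorem sum_id_eq_zero (hq : 2 < q) : ∑ a : F, a = 0 := by
  simpa using sum_pow_lt_card_sub_one F 1 (by omega)

-- `1 - a ^ (q - 1)` is the indicator function of `0`.
def dualMonomial (D : ℕ) (a : F) : F :=
  if D = 0 then 1 - a ^ (q - 1) else -a ^ (q - 1 - D)

theorem sum_pow_mul_dualMonomial {m D : ℕ} (hm : m < q) (hD : D < q) :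
    ∑ a : F, a ^ m * dualMonomial D a = if m = D then 1 else 0 := by
  classical
  have hq : 1 < q := Fintype.one_lt_card
  unfold dualMonomial
  split_ifs with hD0 hmD hmD
  · have h : ∀ a : F, a ^ m * (1 - a ^ (q - 1)) = if a = 0 then 1 else 0 := fun a => by
      split_ifs with ha <;> simp_all [pow_card_sub_one_eq_one, Nat.sub_ne_zero_of_lt hq]
    simp [h]
  · have h : ∀ a : F, a ^ m * (1 - a ^ (q - 1)) = 0 := fun a => by
      rcases eq_or_ne a 0 with rfl | ha
      · simp [zero_pow (show m ≠ 0 by omega)]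
      · simp [pow_card_sub_one_eq_one a ha]
    simp [h]
  all_goals
    simp only [mul_neg, ← pow_add, sum_neg_distrib]
    rw [sum_pow_of_lt_two_mul (by omega)]
  · simp [show m + (q - 1 - D) = q - 1 by omega]
  · simp [show m + (q - 1 - D) ≠ q - 1 by omega]

theorem dualMonomial_card_sub_two (hq : 2 < q) (a : F) : dualMonomial (q - 2) a = -a := by
  simp [dualMonomial, show q - 2 ≠ 0 by omega, show q - 1 - (q - 2) = 1 by omega]

theorem sum_inv_sub_pow_eq_zero (b : F) {n : ℕ} (hn : n < q - 1) :
    ∑ z : F, ((z - b)⁻¹) ^ n = 0 := by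
  calc ∑ z : F, ((z - b)⁻¹) ^ n = ∑ w : F, (w⁻¹) ^ n := (Equiv.subRight b).sum_comp (_ ^ n)
    _ = ∑ w : F, w ^ n := Equiv.sum_comp (Equiv.inv F) (· ^ n)
    _ = 0 := sum_pow_lt_card_sub_one F n hn

theorem sum_inv_sub_eq_zero (hq : 2 < q) (b : F) : ∑ z : F, (z - b)⁻¹ = 0 := by
  simpa using sum_inv_sub_pow_eq_zero b (n := 1) (by omega)

theorem sum_inv_sub_mul_self (hq : 2 < q) (b : F) : ∑ z : F, (z - b)⁻¹ * z = -1 := by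
  classical
  have hsplit : ∀ z : F, (z - b)⁻¹ * z = 1 - (if z = b then 1 else 0) + b * (z - b)⁻¹ :=
    fun z => by
      rcases eq_or_ne z b with rfl | hz
      · simp
      · field_simp [sub_ne_zero.mpr hz]
        simp [hz]
  simp [hsplit, sum_add_distrib, ← mul_sum, sum_inv_sub_eq_zero hq]

theorem sum_mul_comp_add_inv (g : F → F) (u : F) :
    ∑ c : F, c * g (u + c⁻¹) = ∑ z : F, (z - u)⁻¹ * g z := by
  calc ∑ c : F, c * g (u + c⁻¹) = ∑ w : F, w⁻¹ * g (u + w) := by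
        simpa using Equiv.sum_comp (Equiv.inv F) fun w => w⁻¹ * g (u + w)
    _ = ∑ z : F, (z - u)⁻¹ * g z := by
        simpa using ((Equiv.subRight u).sum_comp fun w => w⁻¹ * g (u + w)).symm

theorem sum_inv_sub_mul_inv_sub_pow_of_ne {b c : F} (hbc : b ≠ c) {n : ℕ} (hn1 : 1 ≤ n)
    (hn : n < q - 1) :
    ∑ z : F, (z - b)⁻¹ * ((z - c)⁻¹) ^ n = (n + 1) * ((b - c)⁻¹) ^ (n + 1) := by
  classical
  induction n, hn1 using Nat.le_induction with
  | base =>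
    simp only [pow_one, inv_sub_mul_inv_sub_eq hbc, sum_add_distrib, ← mul_sum, sum_sub_distrib,
      sum_ite_eq', mem_univ, if_true, sum_inv_sub_eq_zero (show 2 < q by omega)]
    ring
  | succ n hn1 ih =>
    simp only [inv_sub_mul_inv_sub_mul_pow_succ_eq hbc (show n ≠ 0 by omega), sum_add_distrib,
      ← mul_sum, sum_sub_distrib, sum_ite_eq', mem_univ, if_true, ih (by omega),
      sum_inv_sub_pow_eq_zero c (show n + 1 < q - 1 by omega)]
    push_cast
    ring

theorem sum_inv_sub_mul_inv_sub_pow (b c : F) {n : ℕ} (hn1 : 1 ≤ n) (hn : n + 1 < q - 1) :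
    ∑ z : F, (z - b)⁻¹ * ((z - c)⁻¹) ^ n = (n + 1) * ((b - c)⁻¹) ^ (n + 1) := by
  rcases eq_or_ne b c with rfl | hbc
  · simp only [sub_self, inv_zero, zero_pow (Nat.succ_ne_zero n), mul_zero, ← pow_succ']
    exact sum_inv_sub_pow_eq_zero b hn
  · exact sum_inv_sub_mul_inv_sub_pow_of_ne hbc hn1 (by omega)

theorem sum_inv_sub_mul_inv_sub (hq : 3 < q) (b c : F) :
    ∑ z : F, (z - b)⁻¹ * (z - c)⁻¹ = 2 * ((b - c)⁻¹) ^ 2 := by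
  simpa [one_add_one_eq_two] using sum_inv_sub_mul_inv_sub_pow b c (n := 1) le_rfl (by omega)

end FiniteField

namespace MvPolynomial

open FiniteField

variable {F σ : Type*} [Field F] [Fintype F] [Fintype σ] [DecidableEq σ]

local notation "q" => Fintype.card F

theorem coeff_eq_sum_eval_mul_prod_dualMonomial (P : MvPolynomial σ F)
    (hP : ∀ i, P.degreeOf i < q) (D : σ →₀ ℕ) (hD : ∀ i, D i < q) :
    P.coeff D = ∑ x : σ → F, eval x P * ∏ i, dualMonomial (D i) (x i) := by
  classical
  have hpair : ∀ m ∈ P.support,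
      ∑ x : σ → F, ∏ i, x i ^ m i * dualMonomial (D i) (x i) = if m = D then 1 else 0 := by
    intro m hm
    have hm : ∀ i, m i < q := fun i =>
      (degreeOf_lt_iff Fintype.card_pos).mp (hP i) m hm
    rw [← Fintype.prod_sum fun i a => a ^ m i * dualMonomial (D i) a]
    simp only [sum_pow_mul_dualMonomial (hm _) (hD _), prod_boole, mem_univ, true_imp_iff,
      ← DFunLike.ext_iff]
  symm
  calc ∑ x : σ → F, eval x P * ∏ i, dualMonomial (D i) (x i)
      = ∑ m ∈ P.support, P.coeff m *
          ∑ x : σ → F, ∏ i, x i ^ m i * dualMonomial (D i) (x i) := by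
        rw [sum_congr rfl fun x _ => by rw [eval_eq']]
        simp only [sum_mul, mul_sum, mul_assoc, ← prod_mul_distrib]
        exact sum_comm
    _ = P.coeff D := by
        rw [sum_congr rfl fun m hm => by rw [hpair m hm]]
        simp only [mul_ite, mul_one, mul_zero, sum_ite_eq', mem_support_iff, ite_not]
        split_ifs with h <;> simp [h]

theorem coeff_eq_zero_of_sum_eval_update_eq_zero (P : MvPolynomial σ F)
    (hP : ∀ i, P.degreeOf i < q) (i : σ)
    (hsum : ∀ x, ∑ a : F, eval (Function.update x i a) P = 0) (m : σ →₀ ℕ)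
    (hm : m i = q - 1) : P.coeff m = 0 := by
  by_contra hcoeff
  have hlt : ∀ j, m j < q := fun j =>
    (degreeOf_lt_iff Fintype.card_pos).mp (hP j) m (mem_support_iff.mpr hcoeff)
  apply hcoeff
  rw [coeff_eq_sum_eval_mul_prod_dualMonomial P hP m hlt]
  refine Fintype.sum_eq_zero_of_forall_sum_update_eq_zero i _ fun x => ?_
  -- the weight dual to `X i ^ (q - 1)` is the constant `-1`, so the weights do not see `x i`
  have hweight : ∀ a : F, ∏ j, dualMonomial (m j) (Function.update x i a j)
      = ∏ j, dualMonomial (m j) (x j) := fun a => by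
    refine Fintype.prod_congr _ _ fun j => ?_
    rcases eq_or_ne j i with rfl | hj
    · have : q - 1 ≠ 0 := Nat.sub_ne_zero_of_lt Fintype.one_lt_card
      simp [dualMonomial, hm, this]
    · rw [Function.update_of_ne hj]
  simp only [hweight, ← sum_mul, hsum, zero_mul]

theorem totalDegree_le_of_sum_eval_update_eq_zero (P : MvPolynomial σ F)
    (hP : ∀ i, P.degreeOf i < q)
    (hsum : ∀ i x, ∑ a : F, eval (Function.update x i a) P = 0) :
    P.totalDegree ≤ Fintype.card σ * (q - 2) := by
  refine Finset.sup_le fun m hm => ?_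
  have hle : ∀ j, m j ≤ q - 2 := fun j => by
    have hlt := (degreeOf_lt_iff Fintype.card_pos).mp (hP j) m hm
    have hne : m j ≠ q - 1 := fun h =>
      mem_support_iff.mp hm (coeff_eq_zero_of_sum_eval_update_eq_zero P hP j (hsum j) m h)
    omega
  rw [Finsupp.sum_fintype _ _ fun _ => rfl]
  simpa using Finset.sum_le_card_nsmul univ _ _ fun j _ => hle j

end MvPolynomial

section SwapInvAdd

open FiniteField

variable {F : Type*} [Field F]

def invSubOneInv (y : F) : F := (y⁻¹ - 1)⁻¹

theorem sum_mul_invSubOneInv_pow [Fintype F] {n : ℕ} (hn1 : 1 ≤ n)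
    (hn : n < Fintype.card F - 1) :
    ∑ a : F, a * invSubOneInv a ^ n = (n + 1) * (-1) ^ (n + 1) := by
  simpa [invSubOneInv] using (sum_mul_comp_add_inv (fun z => ((z - 1)⁻¹) ^ n) 0).trans
    (sum_inv_sub_mul_inv_sub_pow_of_ne zero_ne_one hn1 hn)

variable [DecidableEq F]

def swapInvAdd (y z : F) : F := Equiv.swap (0 : F) 1 (y⁻¹ + z⁻¹)

-- The function `f_{n+1}` of the recursion, once `x ^ (q - 2) = x⁻¹` and `t = (0 1)` on `𝔽_q`.
def swapInvAddChain : (n : ℕ) → (Fin (n + 1) → F) → F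
  | 0, x => x 0
  | n + 1, x => swapInvAdd (swapInvAddChain n (Fin.init x)) (x (Fin.last _))

theorem swapInvAdd_comm (y z : F) : swapInvAdd y z = swapInvAdd z y := by
  rw [swapInvAdd, swapInvAdd, add_comm]

theorem swapInvAdd_bijective_left (z : F) : Function.Bijective fun y => swapInvAdd y z :=
  ((Equiv.inv F).trans ((Equiv.addRight z⁻¹).trans (Equiv.swap 0 1))).bijective

theorem swapInvAdd_bijective_right (y : F) : Function.Bijective (swapInvAdd y) := by
  rw [show swapInvAdd y = fun z => swapInvAdd z y from funext (swapInvAdd_comm y)]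
  exact swapInvAdd_bijective_left y

theorem swapInvAddChain_bijective_update (n : ℕ) (x : Fin (n + 1) → F) (i : Fin (n + 1)) :
    Function.Bijective fun a => swapInvAddChain n (Function.update x i a) := by
  induction n with
  | zero =>
    obtain rfl := Fin.fin_one_eq_zero i
    simp only [swapInvAddChain, Function.update_self]
    exact Function.bijective_id
  | succ n ih =>
    induction i using Fin.lastCases with
    | last =>
      simpa [swapInvAddChain, Fin.init_update_last] using
        swapInvAdd_bijective_right (swapInvAddChain n (Fin.init x))
    | cast j =>
      simp only [swapInvAddChain, Fin.init_update_castSucc,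
        Function.update_of_ne (Fin.castSucc_lt_last j).ne']
      exact (swapInvAdd_bijective_left _).comp (ih (Fin.init x) j)

theorem swap_zero_one_apply (z : F) :
    Equiv.swap (0 : F) 1 z = z + (if z = 0 then 1 else 0) - if z = 1 then 1 else 0 := by
  rw [Equiv.swap_apply_def]
  split_ifs <;> simp_all

theorem invSubOneInv_swap_zero_one (z : F) :
    invSubOneInv (Equiv.swap (0 : F) 1 z) = -(1 + (z - 1)⁻¹) := by
  rw [invSubOneInv, Equiv.swap_apply_def]
  split_ifs with h0 h1
  · simp [h0]
  · simp [h1]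
  · have := sub_ne_zero.mpr h1
    field_simp
    ring

variable [Fintype F]

local notation "q" => Fintype.card F

theorem eval_X_add_sum_range_pow_eq_swap (a : F) :
    Polynomial.eval a (Polynomial.X + ∑ k ∈ range (q - 1), Polynomial.X ^ k)
      = Equiv.swap (0 : F) 1 a := by
  have hq : 1 < q := Fintype.one_lt_card
  simp only [Polynomial.eval_add, Polynomial.eval_X, Polynomial.eval_finsetSum,
    Polynomial.eval_pow, swap_zero_one_apply, add_sub_assoc]
  congr 1
  rcases eq_or_ne a 1 with rfl | h1
  · simp [Nat.cast_sub hq.le]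
  rw [geom_sum_eq h1]
  rcases eq_or_ne a 0 with rfl | h0
  · simp [Nat.sub_ne_zero_of_lt hq]
  · simp [FiniteField.pow_card_sub_one_eq_one a h0, h0, h1]

theorem sum_swapInvAddChain_update_eq_zero (hq : 2 < q) (n : ℕ) (x : Fin (n + 1) → F)
    (i : Fin (n + 1)) : ∑ a : F, swapInvAddChain n (Function.update x i a) = 0 :=
  ((swapInvAddChain_bijective_update n x i).sum_comp fun a => a).trans (sum_id_eq_zero hq)

theorem sum_mul_swapInvAdd (hq : 2 < q) (y : F) :
    ∑ c : F, c * swapInvAdd y c = -1 - y + invSubOneInv y := by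
  rw [show ∑ c : F, c * swapInvAdd y c = ∑ c : F, c * Equiv.swap 0 1 (y⁻¹ + c⁻¹) from rfl,
    sum_mul_comp_add_inv]
  simp only [swap_zero_one_apply, mul_add, mul_sub, sum_add_distrib, sum_sub_distrib,
    sum_inv_sub_mul_self hq, mul_ite, mul_one, mul_zero, sum_ite_eq', mem_univ, if_true]
  rw [invSubOneInv, ← neg_sub y⁻¹ 1, inv_neg, zero_sub, inv_neg, inv_inv]
  ring

theorem sum_mul_invSubOneInv_swapInvAdd (hq : 3 < q) (y : F) :
    ∑ c : F, c * invSubOneInv (swapInvAdd y c) = -2 * invSubOneInv y ^ 2 := by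
  rw [show ∑ c : F, c * invSubOneInv (swapInvAdd y c)
      = ∑ c : F, c * invSubOneInv (Equiv.swap (0 : F) 1 (y⁻¹ + c⁻¹)) from rfl,
    sum_mul_comp_add_inv fun z => invSubOneInv (Equiv.swap (0 : F) 1 z)]
  simp only [invSubOneInv_swap_zero_one, mul_neg, mul_add, mul_one, sum_neg_distrib,
    sum_add_distrib]
  rw [sum_inv_sub_eq_zero (by omega), sum_inv_sub_mul_inv_sub hq, invSubOneInv]
  ring

theorem sum_mul_invSubOneInv_swapInvAdd_sq (hq : 4 < q) (y : F) :
    ∑ c : F, c * invSubOneInv (swapInvAdd y c) ^ 2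
      = 4 * invSubOneInv y ^ 2 + 3 * invSubOneInv y ^ 3 := by
  rw [show ∑ c : F, c * invSubOneInv (swapInvAdd y c) ^ 2
      = ∑ c : F, c * invSubOneInv (Equiv.swap (0 : F) 1 (y⁻¹ + c⁻¹)) ^ 2 from rfl,
    sum_mul_comp_add_inv fun z => invSubOneInv (Equiv.swap (0 : F) 1 z) ^ 2]
  have hexpand : ∀ z : F, (z - y⁻¹)⁻¹ * invSubOneInv (Equiv.swap (0 : F) 1 z) ^ 2
      = (z - y⁻¹)⁻¹ + 2 * ((z - y⁻¹)⁻¹ * (z - 1)⁻¹) + (z - y⁻¹)⁻¹ * ((z - 1)⁻¹) ^ 2 :=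
    fun z => by rw [invSubOneInv_swap_zero_one]; ring
  rw [sum_congr rfl fun z _ => hexpand z, sum_add_distrib, sum_add_distrib, ← mul_sum,
    sum_inv_sub_eq_zero (by omega), sum_inv_sub_mul_inv_sub (by omega),
    sum_inv_sub_mul_inv_sub_pow _ _ (n := 2) (by norm_num) (by omega), invSubOneInv]
  ring

theorem sum_prod_mul_comp_swapInvAddChain_zero (h : F → F) :
    ∑ x : Fin 1 → F, (∏ i, x i) * h (swapInvAddChain 0 x) = ∑ a : F, a * h a := by
  rw [← (Equiv.funUnique (Fin 1) F).symm.sum_comp]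
  simp [swapInvAddChain]

theorem sum_prod_mul_comp_swapInvAddChain_succ (n : ℕ) (h : F → F) :
    ∑ x : Fin (n + 2) → F, (∏ i, x i) * h (swapInvAddChain (n + 1) x)
      = ∑ y : Fin (n + 1) → F,
          (∏ i, y i) * ∑ a : F, a * h (swapInvAdd (swapInvAddChain n y) a) := by
  rw [← (Fin.snocEquiv fun _ => F).sum_comp, Fintype.sum_prod_type_right]
  refine sum_congr rfl fun y _ => ?_
  rw [mul_sum]
  refine sum_congr rfl fun a _ => ?_
  have hsnoc : (Fin.snocEquiv fun _ => F) (a, y) = Fin.snoc y a := rfl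
  simp [hsnoc, swapInvAddChain, Fin.prod_univ_castSucc]
  ring

theorem sum_prod_mul_swapInvAddChain_three_eq (hq : 4 < q) :
    ∑ x : Fin 4 → F, (∏ i, x i) * swapInvAddChain 3 x = ∑ a : F, a * (-1 - a + invSubOneInv a
      - 6 * invSubOneInv a ^ 2 - 6 * invSubOneInv a ^ 3) := by
  have hsum := sum_id_eq_zero (show 2 < q by omega)
  have hneg : ∑ a : F, -a = 0 := by rw [sum_neg_distrib, hsum, neg_zero]
  have hc₁ := sum_mul_swapInvAdd (show 2 < q by omega)
  have hc₂ := sum_mul_invSubOneInv_swapInvAdd (show 3 < q by omega)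
  have h₂ : ∀ s : F, ∑ a : F, a * (-1 - swapInvAdd s a + invSubOneInv (swapInvAdd s a))
      = 1 + s - invSubOneInv s - 2 * invSubOneInv s ^ 2 := fun s => by
    simp only [mul_add, mul_sub, mul_neg, mul_one, sum_add_distrib, sum_sub_distrib, hneg, hc₁,
      hc₂]
    ring
  have h₃ : ∀ s : F, ∑ a : F, a * (1 + swapInvAdd s a - invSubOneInv (swapInvAdd s a)
        - 2 * invSubOneInv (swapInvAdd s a) ^ 2)
      = -1 - s + invSubOneInv s - 6 * invSubOneInv s ^ 2 - 6 * invSubOneInv s ^ 3 := fun s => by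
    simp only [mul_add, mul_sub, mul_one, mul_left_comm _ (2 : F), ← mul_sum, sum_add_distrib,
      sum_sub_distrib, hsum, hc₁, hc₂, sum_mul_invSubOneInv_swapInvAdd_sq hq]
    ring
  have e₃ := sum_prod_mul_comp_swapInvAddChain_succ 2 (fun s : F => s)
  have e₂ := sum_prod_mul_comp_swapInvAddChain_succ 1 (fun s : F => -1 - s + invSubOneInv s)
  have e₁ := sum_prod_mul_comp_swapInvAddChain_succ 0
    (fun s : F => 1 + s - invSubOneInv s - 2 * invSubOneInv s ^ 2)
  have e₀ := sum_prod_mul_comp_swapInvAddChain_zero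
    (fun s : F => -1 - s + invSubOneInv s - 6 * invSubOneInv s ^ 2 - 6 * invSubOneInv s ^ 3)
  simp only [Nat.reduceAdd, hc₁, h₂, h₃] at e₃ e₂ e₁
  rw [e₃, e₂, e₁, e₀]

theorem sum_prod_mul_swapInvAddChain_three (hq : 4 < q) :
    ∑ x : Fin 4 → F, (∏ i, x i) * swapInvAddChain 3 x = -4 := by
  have hneg : ∑ a : F, -a = 0 := by rw [sum_neg_distrib, sum_id_eq_zero (by omega), neg_zero]
  have hρ := fun n (hn1 : 1 ≤ n) (hn : n ≤ 3) =>
    sum_mul_invSubOneInv_pow (F := F) hn1 (show n < q - 1 by omega)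
  have hρ₁ : ∑ a : F, a * invSubOneInv a = 2 := by
    simpa [one_add_one_eq_two] using hρ 1 le_rfl (by norm_num)
  rw [sum_prod_mul_swapInvAddChain_three_eq hq]
  simp only [mul_add, mul_sub, mul_neg, mul_one, mul_left_comm _ (6 : F), ← mul_sum,
    sum_add_distrib, sum_sub_distrib, hneg, ← pow_two,
    sum_pow_lt_card_sub_one F 2 (by omega), hρ₁, hρ 2 (by norm_num) (by norm_num),
    hρ 3 (by norm_num) (by norm_num)]
  norm_num

theorem totalDegree_eq_of_eval_eq_swapInvAddChain_three (hq : 4 < q) (hchar : ringChar F ≠ 2)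
    (P : MvPolynomial (Fin 4) F) (hP : ∀ i, P.degreeOf i < q)
    (heval : ∀ x, MvPolynomial.eval x P = swapInvAddChain 3 x) :
    P.totalDegree = 4 * (q - 2) := by
  refine le_antisymm ?_ ?_
  · simpa using MvPolynomial.totalDegree_le_of_sum_eval_update_eq_zero P hP fun i x => by
      simpa only [heval] using sum_swapInvAddChain_update_eq_zero (by omega) 3 x i
  set D : Fin 4 →₀ ℕ := Finsupp.equivFunOnFinite.symm fun _ => q - 2
  have hcoeff : P.coeff D = -4 := by
    rw [MvPolynomial.coeff_eq_sum_eval_mul_prod_dualMonomial P hP D fun _ => by simp [D]; omega,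
      ← sum_prod_mul_swapInvAddChain_three hq]
    refine sum_congr rfl fun x _ => ?_
    simp [D, heval, dualMonomial_card_sub_two (show 2 < q by omega), prod_neg]
    ring
  have hD : (D.sum fun _ e => e) = 4 * (q - 2) := by simp [D, Finsupp.sum_fintype]
  rw [← hD]
  refine MvPolynomial.le_totalDegree (MvPolynomial.mem_support_iff.mpr ?_)
  rw [hcoeff, neg_ne_zero, show (4 : F) = 2 * 2 by norm_num]
  exact mul_ne_zero (Ring.two_ne_zero hchar) (Ring.two_ne_zero hchar)

end SwapInvAdd

open MvPolynomial

theorem lpp_four_vars_max_degree_general {p r : ℕ} (hp : p.Prime) (hodd : p ≠ 2)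
    {F : Type*} [Field F] [Fintype F]
    (hF : Fintype.card F = p ^ r) (hq : 3 < Fintype.card F)
    (t : Polynomial F)
    (ht : t = Polynomial.X + ∑ k ∈ Finset.range (Fintype.card F - 1), Polynomial.X ^ k)
    (f₂ : MvPolynomial (Fin 2) F)
    (heq₂ : ∀ x : Fin 2 → F, eval x f₂ =
      Polynomial.eval ((x 0) ^ (Fintype.card F - 2) + (x 1) ^ (Fintype.card F - 2)) t)
    (f₃ : MvPolynomial (Fin 3) F)
    (heq₃ : ∀ x : Fin 3 → F, eval x f₃ =
      Polynomial.eval ((eval ![x 0, x 1] f₂) ^ (Fintype.card F - 2)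
        + (x 2) ^ (Fintype.card F - 2)) t)
    (f₄ : MvPolynomial (Fin 4) F)
    (hred₄ : ∀ i : Fin 4, f₄.degreeOf i < Fintype.card F)
    (heq₄ : ∀ x : Fin 4 → F, eval x f₄ =
      Polynomial.eval ((eval ![x 0, x 1, x 2] f₃) ^ (Fintype.card F - 2)
        + (x 3) ^ (Fintype.card F - 2)) t) :
    f₄.totalDegree = 4 * (Fintype.card F - 2) := by
  classical
  have hcard_odd : Fintype.card F % 2 = 1 := Nat.odd_iff.mp (hF ▸ (hp.odd_of_ne_two hodd).pow)
  have hchar : ringChar F ≠ 2 := fun h => by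
    have := FiniteField.even_card_iff_char_two.mp h
    omega
  have ht' : ∀ a, t.eval a = Equiv.swap 0 1 a := fun a => ht ▸ eval_X_add_sum_range_pow_eq_swap a
  refine totalDegree_eq_of_eval_eq_swapInvAddChain_three (by omega) hchar f₄ hred₄ fun x => ?_
  simp only [heq₄, heq₃, heq₂, ht',
    FiniteField.pow_card_sub_two_eq_inv (show 2 < Fintype.card F by omega)]
  rfl

/-- For `q = p^r > 3` with `p` an odd prime, `t(x) = x + ∑_{k=0}^{q-2} x^k`, and the
recursively defined `f₁ = x₁`, `fᵢ = ` reduced form of `t(f_{i-1}^{q-2} + xᵢ^{q-2})`,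
the polynomial `f₄` has total degree `4(q-2)`. -/
theorem lpp_four_vars_max_degree {p r : ℕ} (hp : p.Prime) (hodd : p ≠ 2) (hr : 0 < r)
    {F : Type*} [Field F] [Fintype F] [DecidableEq F]
    (hF : Fintype.card F = p ^ r) (hq : 3 < Fintype.card F)
    (t : Polynomial F)
    (ht : t = Polynomial.X + ∑ k ∈ Finset.range (Fintype.card F - 1), Polynomial.X ^ k)
    (f₂ : MvPolynomial (Fin 2) F)
    (hred₂ : ∀ i : Fin 2, f₂.degreeOf i < Fintype.card F)
    (heq₂ : ∀ x : Fin 2 → F, eval x f₂ =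
      Polynomial.eval ((x 0) ^ (Fintype.card F - 2) + (x 1) ^ (Fintype.card F - 2)) t)
    (f₃ : MvPolynomial (Fin 3) F)
    (hred₃ : ∀ i : Fin 3, f₃.degreeOf i < Fintype.card F)
    (heq₃ : ∀ x : Fin 3 → F, eval x f₃ =
      Polynomial.eval ((eval ![x 0, x 1] f₂) ^ (Fintype.card F - 2)
        + (x 2) ^ (Fintype.card F - 2)) t)
    (f₄ : MvPolynomial (Fin 4) F)
    (hred₄ : ∀ i : Fin 4, f₄.degreeOf i < Fintype.card F)
    (heq₄ : ∀ x : Fin 4 → F, eval x f₄ =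
      Polynomial.eval ((eval ![x 0, x 1, x 2] f₃) ^ (Fintype.card F - 2)
        + (x 3) ^ (Fintype.card F - 2)) t) :
    f₄.totalDegree = 4 * (Fintype.card F - 2) :=
  lpp_four_vars_max_degree_general hp hodd hF hq t ht f₂ heq₂ f₃ heq₃ f₄ hred₄ heq₄
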